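/- arXiv:1504.02577 — 2 statements merged into one kernel-verified Lean document; each statement's English description precedes it below -/
import Mathlib

section
/- Let R be a family of subsets of a domain D and let m ≥ 1 be a natural number. Suppose that every element x ∈ D belongs to at most m distinct members of R, i.e., the set {A ∈ R : x ∈ A} has cardinality at most m for every x ∈ D. Then every nonempty finite set Q ⊆ D that is shattered by R satisfies 2^(|Q| − 1) ≤ m; equivalently, the VC dimension of R is at most log₂ m + 1. -/
/-- If every element of the domain `D` belongs to at most `m ≥ 1` members of a set
family `R`, then every nonempty finite set `Q` shattered by `R` satisfies
`2 ^ (|Q| - 1) ≤ m`; equivalently, the VC dimension of `R` is at most `log₂ m + 1`. -/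
theorem vc_bound_of_point_cover {D : Type*} (R : Set (Set D)) (m : ℕ) (hm : 1 ≤ m)
    (hbound : ∀ x : D, {A : Set D | A ∈ R ∧ x ∈ A}.encard ≤ m)
    (Q : Finset D) (hQ : Q.Nonempty)
    (hshatter : ∀ S ⊆ Q, ∃ A ∈ R, A ∩ ↑Q = ↑S) :
    2 ^ (Q.card - 1) ≤ m := by
  classical
  obtain ⟨x, hx⟩ := hQ
  set P := (Q.erase x).powerset with hP
  have hchoose : ∀ S ∈ P, ∃ A ∈ R, A ∩ ↑Q = ↑(insert x S) := by
    intro S hS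
    apply hshatter
    intro y hy
    rcases Finset.mem_insert.mp hy with h | h
    · exact h ▸ hx
    · exact Finset.mem_of_mem_erase (Finset.mem_powerset.mp hS h)
  choose f hfR hfQ using hchoose
  set g : Finset D → Set D := fun S => if h : S ∈ P then f S h else ∅ with hg
  have hinj : Set.InjOn g (↑P : Set (Finset D)) := by
    intro S₁ h1 S₂ h2 heq
    rw [Finset.mem_coe] at h1 h2
    simp only [hg, dif_pos h1, dif_pos h2] at heq
    have hQ1 := hfQ S₁ h1
    rw [heq, hfQ S₂ h2] at hQ1
    have hins : insert x S₂ = insert x S₁ := Finset.coe_injective hQ1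
    have hx1 : x ∉ S₁ := fun hh =>
      (Finset.notMem_erase x Q) (Finset.mem_powerset.mp h1 hh)
    have hx2 : x ∉ S₂ := fun hh =>
      (Finset.notMem_erase x Q) (Finset.mem_powerset.mp h2 hh)
    have := congrArg (Finset.erase · x) hins
    simpa [Finset.erase_insert hx1, Finset.erase_insert hx2] using this.symm
  have hsub : g '' (↑P : Set (Finset D)) ⊆ {A : Set D | A ∈ R ∧ x ∈ A} := by
    rintro _ ⟨S, hS, rfl⟩
    rw [Finset.mem_coe] at hS
    simp only [hg, dif_pos hS, Set.mem_setOf_eq]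
    refine ⟨hfR S hS, ?_⟩
    have : x ∈ f S hS ∩ ↑Q := by
      rw [hfQ S hS]; exact_mod_cast Finset.mem_insert_self x S
    exact this.1
  have hcard : (P.card : ℕ∞) ≤ m := by
    calc (P.card : ℕ∞) = (↑P : Set (Finset D)).encard := by
          rw [Set.encard_coe_eq_coe_finsetCard]
      _ = (g '' ↑P).encard := (Set.InjOn.encard_image hinj).symm
      _ ≤ ({A : Set D | A ∈ R ∧ x ∈ A}).encard := Set.encard_mono hsub
      _ ≤ m := hbound x
  have hPcard : P.card = 2 ^ (Q.card - 1) := by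
    rw [hP, Finset.card_powerset, Finset.card_erase_of_mem hx]
  rw [hPcard] at hcard
  exact_mod_cast hcard
end

section
/- There exists a universal positive constant c with the following property. Let V be a nonempty finite vertex set, T ≥ 1 a natural number, and φ a probability distribution on the set of T-paths over V. Given ε, δ ∈ (0, 1), let R be a natural number with R ≥ (c / ε²)·(log₂ C(T+1, 2) + 1 + ln(1/δ)), and let p₁, …, p_R be independent random T-paths each distributed according to φ. Then with probability at least 1 − δ, simultaneously for every pair of distinct vertices u, v ∈ V, the empirical path similarity S_RP(u, v) = #{r : pᵣ ∈ P_{u,v}} / R satisfies |φ(P_{u,v}) − S_RP(u, v)| ≤ ε, where φ(P_{u,v}) is the probability that a φ-random T-path contains both u and v. -/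
/-!
Fix a pair `u ≠ v` and let `μ = φ(P_{u,v})`. A multiplicative Chernoff bound shows that the
empirical frequency of `P_{u,v}` deviates from `μ` by more than `ε` with probability at most
`e³ μ e^{-Rε²/8}`: proportional to `μ`, not merely small. Each path contains at most
`C(T+1, 2)` unordered pairs of distinct vertices, so the masses `φ(P_{u,v})` of all ordered
pairs sum to at most `2 C(T+1, 2)`. The union bound over all pairs therefore costs a factor
`2 C(T+1, 2)`, independent of `|V|`, and `R ≥ (32/ε²)(log₂ C(T+1,2) + 1 + ln(1/δ))` makes the
total at most `δ`.
-/

open Finset Real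

namespace PathSampling

variable {α : Type*}

noncomputable def hits {R : ℕ} (S : Set α) (ps : Fin R → α) : ℝ :=
  ∑ r, S.indicator (fun _ => (1 : ℝ)) (ps r)

lemma hits_nonneg {R : ℕ} (S : Set α) (ps : Fin R → α) : 0 ≤ hits S ps :=
  sum_nonneg fun _ _ => Set.indicator_nonneg (fun _ _ => zero_le_one) _

variable [Fintype α]

noncomputable def piProb (w : α → ℝ) (R : ℕ) (E : Set (Fin R → α)) : ℝ :=
  ∑ ps, E.indicator (fun ps => ∏ r, w (ps r)) ps

noncomputable def mass (w : α → ℝ) (S : Set α) : ℝ :=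
  ∑ p, S.indicator w p

lemma mass_nonneg {w : α → ℝ} (hw : ∀ p, 0 ≤ w p) (S : Set α) : 0 ≤ mass w S :=
  sum_nonneg fun p _ => Set.indicator_nonneg (fun p _ => hw p) p

lemma mass_le_one {w : α → ℝ} (hw : ∀ p, 0 ≤ w p) (hw1 : ∑ p, w p = 1) (S : Set α) :
    mass w S ≤ 1 :=
  hw1 ▸ sum_le_sum fun p _ => Set.indicator_le_self' (fun p _ => hw p) p

lemma piProb_add_piProb_compl {w : α → ℝ} (hw1 : ∑ p, w p = 1) (R : ℕ) (E : Set (Fin R → α)) :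
    piProb w R E + piProb w R Eᶜ = 1 := by
  simp only [piProb, ← sum_add_distrib, Set.indicator_self_add_compl_apply]
  rw [← Fintype.sum_pow, hw1, one_pow]

lemma piProb_le_sum_of_subset_biUnion {ι : Type*} {w : α → ℝ} (hw : ∀ p, 0 ≤ w p) {R : ℕ}
    {E : Set (Fin R → α)} (s : Finset ι) (F : ι → Set (Fin R → α)) (hE : E ⊆ ⋃ i ∈ s, F i) :
    piProb w R E ≤ ∑ i ∈ s, piProb w R (F i) := by
  unfold piProb
  rw [sum_comm]
  refine sum_le_sum fun ps _ => ?_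
  have hnonneg : ∀ G : Set (Fin R → α), 0 ≤ G.indicator (fun ps => ∏ r, w (ps r)) ps :=
    fun G => Set.indicator_nonneg (fun ps _ => prod_nonneg fun r _ => hw (ps r)) ps
  by_cases hps : ps ∈ E
  · obtain ⟨i, hi, hFi⟩ := Set.mem_iUnion₂.1 (hE hps)
    calc E.indicator _ ps = (F i).indicator (fun ps => ∏ r, w (ps r)) ps := by
          rw [Set.indicator_of_mem hps, Set.indicator_of_mem hFi]
      _ ≤ _ := single_le_sum (fun j _ => hnonneg (F j)) hi
  · rw [Set.indicator_of_notMem hps]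
    exact sum_nonneg fun j _ => hnonneg (F j)

lemma piProb_le_add_of_subset_union {w : α → ℝ} (hw : ∀ p, 0 ≤ w p) {R : ℕ}
    {E F G : Set (Fin R → α)} (h : E ⊆ F ∪ G) : piProb w R E ≤ piProb w R F + piProb w R G := by
  simpa using piProb_le_sum_of_subset_biUnion hw univ (fun b : Bool => cond b F G)
    (by simpa [← Set.union_eq_iUnion] using h)

lemma sum_mul_exp_indicator {w : α → ℝ} (hw1 : ∑ p, w p = 1) (S : Set α) (t : ℝ) :
    ∑ p, w p * exp (t * S.indicator (fun _ => (1 : ℝ)) p) = 1 + mass w S * (exp t - 1) := by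
  have hpt : ∀ p, w p * exp (t * S.indicator (fun _ => (1 : ℝ)) p)
      = w p + S.indicator w p * (exp t - 1) := fun p => by
    by_cases hp : p ∈ S <;> simp [hp]; ring
  simp only [hpt, sum_add_distrib, ← sum_mul, hw1, mass]

/-- Taking `t ≥ 0` bounds the upper tail of `hits S`, taking `t ≤ 0` its lower tail. -/
lemma piProb_le_exp_chernoff {w : α → ℝ} (hw : ∀ p, 0 ≤ w p) (hw1 : ∑ p, w p = 1)
    (S : Set α) {R : ℕ} (t a : ℝ) {E : Set (Fin R → α)}
    (hE : ∀ ps ∈ E, 0 ≤ t * (hits S ps - a)) :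
    piProb w R E ≤ exp (-(t * a) + R * mass w S * (exp t - 1)) := by
  have hbase : 0 ≤ 1 + mass w S * (exp t - 1) := by
    nlinarith [mass_nonneg hw S, mass_le_one hw hw1 S, exp_pos t]
  calc piProb w R E
      ≤ ∑ ps : Fin R → α,
          exp (-(t * a)) * ∏ r, (w (ps r) * exp (t * S.indicator (fun _ => (1 : ℝ)) (ps r))) := by
        refine sum_le_sum fun ps _ => ?_
        have hprod :
            exp (-(t * a)) * ∏ r, (w (ps r) * exp (t * S.indicator (fun _ => (1 : ℝ)) (ps r)))
              = (∏ r, w (ps r)) * exp (t * (hits S ps - a)) := by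
          rw [prod_mul_distrib, ← exp_sum, ← mul_sum, mul_left_comm, ← exp_add, hits]
          ring_nf
        have hw_prod : 0 ≤ ∏ r, w (ps r) := prod_nonneg fun r _ => hw (ps r)
        rw [hprod]
        by_cases hps : ps ∈ E
        · rw [Set.indicator_of_mem hps]
          exact le_mul_of_one_le_right hw_prod (one_le_exp (hE ps hps))
        · rw [Set.indicator_of_notMem hps]
          positivity
    _ = exp (-(t * a)) * (1 + mass w S * (exp t - 1)) ^ R := by
        rw [← sum_mul_exp_indicator hw1 S t, Fintype.sum_pow, mul_sum]
    _ ≤ exp (-(t * a)) * exp (mass w S * (exp t - 1)) ^ R := by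
        gcongr
        linarith [add_one_le_exp (mass w S * (exp t - 1))]
    _ = exp (-(t * a) + R * mass w S * (exp t - 1)) := by
        rw [← exp_nat_mul, ← exp_add, mul_assoc]

lemma exp_sub_one_le_add_sq {x : ℝ} (hx : |x| ≤ 1) : exp x - 1 ≤ x + x ^ 2 := by
  linarith [(abs_le.1 (abs_exp_sub_one_sub_id_le hx)).2]

lemma piProb_deviation_le_two_mul_exp {w : α → ℝ} (hw : ∀ p, 0 ≤ w p) (hw1 : ∑ p, w p = 1)
    (S : Set α) {R : ℕ} (hR : 0 < R) {ε l : ℝ} (hl0 : 0 ≤ l) (hl1 : l ≤ 1) :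
    piProb w R {ps | ε < |mass w S - hits S ps / R|}
      ≤ 2 * exp (R * (mass w S * l ^ 2 - l * ε)) := by
  set μ := mass w S
  have hR' : (0 : ℝ) < R := by exact_mod_cast hR
  have hμ : 0 ≤ μ := mass_nonneg hw S
  have hsplit : {ps : Fin R → α | ε < |μ - hits S ps / R|}
      ⊆ {ps | (μ + ε) * R ≤ hits S ps} ∪ {ps | hits S ps ≤ (μ - ε) * R} := by
    intro ps (hps : ε < |μ - hits S ps / R|)
    rcases lt_abs.1 hps with h | h
    · exact Or.inr ((div_lt_iff₀ hR').1 (by linarith : hits S ps / R < μ - ε)).le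
    · exact Or.inl ((lt_div_iff₀ hR').1 (by linarith : μ + ε < hits S ps / R)).le
  have hupper := piProb_le_exp_chernoff hw hw1 S (E := {ps : Fin R → α | (μ + ε) * R ≤ hits S ps})
    l ((μ + ε) * R) fun ps hps => mul_nonneg hl0 (sub_nonneg.2 hps)
  have hlower := piProb_le_exp_chernoff hw hw1 S (E := {ps : Fin R → α | hits S ps ≤ (μ - ε) * R})
    (-l) ((μ - ε) * R) fun ps hps => mul_nonneg_of_nonpos_of_nonpos (by linarith) (sub_nonpos.2 hps)
  have hq_pos := exp_sub_one_le_add_sq (x := l) (abs_le.2 ⟨by linarith, hl1⟩)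
  have hq_neg := exp_sub_one_le_add_sq (x := -l) (abs_le.2 ⟨by linarith, by linarith⟩)
  calc piProb w R {ps | ε < |μ - hits S ps / R|}
      ≤ piProb w R {ps | (μ + ε) * R ≤ hits S ps} + piProb w R {ps | hits S ps ≤ (μ - ε) * R} :=
        piProb_le_add_of_subset_union hw hsplit
    _ ≤ exp (R * (μ * l ^ 2 - l * ε)) + exp (R * (μ * l ^ 2 - l * ε)) := by
        gcongr
        · refine hupper.trans (exp_le_exp.2 ?_)
          nlinarith [mul_le_mul_of_nonneg_left hq_pos (mul_nonneg hR'.le hμ)]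
        · refine hlower.trans (exp_le_exp.2 ?_)
          nlinarith [mul_le_mul_of_nonneg_left hq_neg (mul_nonneg hR'.le hμ)]
    _ = 2 * exp (R * (μ * l ^ 2 - l * ε)) := by ring

lemma max_mul_neg_log_le_one {μ ε : ℝ} (hμ : 0 < μ) (hε0 : 0 < ε) (hε1 : ε ≤ 1)
    (hεμ : ε ≤ exp 2 * μ) : max μ (ε / 2) * -log μ ≤ 1 := by
  rcases le_total (ε / 2) μ with h | h
  · rw [max_eq_left h]
    have := negMulLog_le_one_sub_self hμ.le
    rw [negMulLog, neg_mul] at this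
    linarith
  · rw [max_eq_right h]
    have hlog : log ε ≤ 2 + log μ := by
      simpa [log_mul (exp_pos 2).ne' hμ.ne'] using log_le_log hε0 hεμ
    have hinv := one_sub_inv_le_log_of_pos hε0
    have hεinv : ε / 2 * ε⁻¹ = 1 / 2 := by field_simp
    nlinarith

lemma piProb_deviation_eq_zero_of_mass_eq_zero {w : α → ℝ} (hw : ∀ p, 0 ≤ w p) (S : Set α)
    {R : ℕ} {ε : ℝ} (hε : 0 ≤ ε) (hμ : mass w S = 0) :
    piProb w R {ps | ε < |mass w S - hits S ps / R|} = 0 := by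
  have hwS : ∀ p ∈ S, w p = 0 := fun p hp => by
    have := (Fintype.sum_eq_zero_iff_of_nonneg
      fun q => Set.indicator_nonneg (fun q _ => hw q) q).1 hμ
    simpa [hp] using congrFun this p
  refine sum_eq_zero fun ps _ => Set.indicator_apply_eq_zero.2 fun (hps : ε < _) => ?_
  by_contra hne
  have hmiss : ∀ r, ps r ∉ S := fun r hr => prod_ne_zero_iff.1 hne r (mem_univ r) (hwS _ hr)
  have hzero : hits S ps = 0 := sum_eq_zero fun r _ => Set.indicator_of_notMem (hmiss r) _
  rw [hμ, hzero, zero_div, sub_zero, abs_zero] at hps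
  exact hps.not_ge hε

lemma piProb_deviation_le_of_small_mass {w : α → ℝ} (hw : ∀ p, 0 ≤ w p) (hw1 : ∑ p, w p = 1)
    (S : Set α) {R : ℕ} {ε : ℝ} (hε0 : 0 < ε) (hε1 : ε ≤ 1) (hR : 1 ≤ R * ε ^ 2)
    (hμ : 0 < mass w S) (hsmall : exp 2 * mass w S ≤ ε) :
    piProb w R {ps | ε < |mass w S - hits S ps / R|}
      ≤ exp 3 * mass w S * exp (-(R * ε ^ 2 / 8)) := by
  set μ := mass w S
  have hR0 : (0 : ℝ) < R := by nlinarith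
  have hμε : μ ≤ ε := (le_mul_of_one_le_left hμ.le (one_le_exp zero_le_two)).trans hsmall
  -- `t = log (ε / μ)` minimises the Chernoff exponent for the upper tail at `ε R`.
  set t := log ε - log μ
  have ht : 2 ≤ t := by
    have := log_le_log (by positivity) hsmall
    rw [log_mul (exp_pos 2).ne' hμ.ne', log_exp] at this
    linarith
  have hexp_t : exp t = ε / μ := by rw [exp_sub, exp_log hε0, exp_log hμ]
  have hupper :
      ∀ ps ∈ {ps : Fin R → α | ε < |μ - hits S ps / R|}, 0 ≤ t * (hits S ps - ε * R) := by
    intro ps (hps : ε < |μ - hits S ps / R|)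
    have hhits : ε < hits S ps / R := by
      rcases lt_abs.1 hps with h | h
      · linarith [div_nonneg (hits_nonneg S ps) hR0.le]
      · linarith
    exact mul_nonneg (by linarith) (sub_nonneg.2 ((lt_div_iff₀ hR0).1 hhits).le)
  refine (piProb_le_exp_chernoff hw hw1 S t (ε * R) hupper).trans ?_
  have hrhs : exp 3 * μ * exp (-(R * ε ^ 2 / 8)) = exp (log μ + 3 - R * ε ^ 2 / 8) := by
    rw [sub_eq_add_neg, exp_add, exp_add, exp_log hμ]
    ring
  rw [hrhs, hexp_t]
  refine exp_le_exp.2 ?_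
  have hmean : R * μ * (ε / μ - 1) = ε * R - μ * R := by field_simp
  have hinv := one_sub_inv_le_log_of_pos hε0
  have hεR : ε⁻¹ ≤ ε * R := by
    rw [inv_le_iff_one_le_mul₀ hε0]
    nlinarith
  have hεinv : ε * ε⁻¹ = 1 := mul_inv_cancel₀ hε0.ne'
  -- `(t - 2)(ε R - 1) ≥ 0` trades `t ε R` for `t`; then `ε R ≥ ε⁻¹` absorbs `-log ε ≤ ε⁻¹ - 1`.
  nlinarith [mul_nonneg (sub_nonneg.2 ht)
      (sub_nonneg.2 (le_trans (one_le_inv_iff₀.2 ⟨hε0, hε1⟩) hεR)),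
    mul_nonneg (sub_nonneg.2 hεR) (by linarith : (0 : ℝ) ≤ 1 - ε / 8), mul_pos hμ hR0]

lemma piProb_deviation_le_of_large_mass {w : α → ℝ} (hw : ∀ p, 0 ≤ w p) (hw1 : ∑ p, w p = 1)
    (S : Set α) {R : ℕ} {ε : ℝ} (hε0 : 0 < ε) (hε1 : ε ≤ 1) (hR : 8 ≤ R * ε ^ 2)
    (hlarge : ε ≤ exp 2 * mass w S) :
    piProb w R {ps | ε < |mass w S - hits S ps / R|}
      ≤ 2 * mass w S * exp (-(R * ε ^ 2 / 8)) := by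
  set μ := mass w S
  have hμ : 0 < μ := pos_of_mul_pos_right (hε0.trans_le hlarge) (exp_pos 2).le
  -- `m ≥ μ` bounds the variance term, and `m ≥ ε / 2` keeps the Chernoff parameter
  -- `ε / (2m)` in `[0, 1]`.
  set m := max μ (ε / 2)
  have hm0 : 0 < m := (half_pos hε0).trans_le (le_max_right _ _)
  have hm1 : m ≤ 1 := max_le (mass_le_one hw hw1 S) (by linarith)
  have hR0 : 0 < R := by
    have : (0 : ℝ) < R := by nlinarith
    exact_mod_cast this
  have hl1 : ε / (2 * m) ≤ 1 :=
    (div_le_one (by positivity)).2 (by linarith [le_max_right μ (ε / 2)])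
  have hdev := piProb_deviation_le_two_mul_exp hw hw1 S hR0 (by positivity) hl1 (ε := ε)
  have hexponent : R * (μ * (ε / (2 * m)) ^ 2 - ε / (2 * m) * ε)
      ≤ -(R * ε ^ 2 / (8 * m)) + -(R * ε ^ 2 / (8 * m)) :=
    calc R * (μ * (ε / (2 * m)) ^ 2 - ε / (2 * m) * ε)
        ≤ R * (m * (ε / (2 * m)) ^ 2 - ε / (2 * m) * ε) := by gcongr; exact le_max_left _ _
      _ = -(R * ε ^ 2 / (8 * m)) + -(R * ε ^ 2 / (8 * m)) := by field_simp; ring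
  have hmass : exp (-(R * ε ^ 2 / (8 * m))) ≤ μ := by
    rw [← le_log_iff_exp_le hμ, neg_le, le_div_iff₀ (by positivity)]
    nlinarith [max_mul_neg_log_le_one hμ hε0 hε1 hlarge]
  have hdecay : exp (-(R * ε ^ 2 / (8 * m))) ≤ exp (-(R * ε ^ 2 / 8)) := by
    gcongr
    nlinarith
  calc piProb w R {ps | ε < |μ - hits S ps / R|}
      ≤ 2 * (exp (-(R * ε ^ 2 / (8 * m))) * exp (-(R * ε ^ 2 / (8 * m)))) := by
        rw [← exp_add]
        exact hdev.trans (by gcongr)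
    _ ≤ 2 * (μ * exp (-(R * ε ^ 2 / 8))) := by gcongr
    _ = 2 * μ * exp (-(R * ε ^ 2 / 8)) := by ring

theorem piProb_deviation_le {w : α → ℝ} (hw : ∀ p, 0 ≤ w p) (hw1 : ∑ p, w p = 1)
    (S : Set α) {R : ℕ} {ε : ℝ} (hε0 : 0 < ε) (hε1 : ε ≤ 1) (hR : 8 ≤ R * ε ^ 2) :
    piProb w R {ps | ε < |mass w S - hits S ps / R|}
      ≤ exp 3 * mass w S * exp (-(R * ε ^ 2 / 8)) := by
  rcases (mass_nonneg hw S).eq_or_lt with hμ | hμ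
  · rw [piProb_deviation_eq_zero_of_mass_eq_zero hw S hε0.le hμ.symm, ← hμ]
    simp
  rcases le_or_gt (exp 2 * mass w S) ε with hsmall | hlarge
  · exact piProb_deviation_le_of_small_mass hw hw1 S hε0 hε1 (by linarith) hμ hsmall
  · refine (piProb_deviation_le_of_large_mass hw hw1 S hε0 hε1 hR hlarge.le).trans ?_
    have : (2 : ℝ) ≤ exp 3 := by linarith [add_one_le_exp (3 : ℝ)]
    gcongr

/-- The paper's `P_{u,v}`. -/
def pathPairs {ι V : Type*} (u v : V) : Set (ι → V) :=
  {q | u ∈ Set.range q ∧ v ∈ Set.range q}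

lemma card_offDiag_image_le {ι V : Type*} [Fintype ι] [DecidableEq V] (p : ι → V) :
    #(univ.image p).offDiag ≤ 2 * (Fintype.card ι).choose 2 := by
  have hk : #(univ.image p) ≤ Fintype.card ι := card_image_le.trans_eq card_univ
  rw [offDiag_card, ← Nat.mul_sub_one, Nat.choose_two_right,
    Nat.two_mul_div_two_of_even (Nat.even_mul_pred_self _)]
  exact Nat.mul_le_mul hk (Nat.sub_le_sub_right hk 1)

lemma sum_mass_pathPairs_le {ι V : Type*} [Fintype ι] [DecidableEq ι] [Fintype V]
    [DecidableEq V] {φ : (ι → V) → ℝ} (hφ : ∀ p, 0 ≤ φ p) (hφ1 : ∑ p, φ p = 1) :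
    ∑ uv ∈ (univ : Finset V).offDiag, mass φ (pathPairs uv.1 uv.2)
      ≤ 2 * ((Fintype.card ι).choose 2 : ℝ) := by
  classical
  have hpairs : ∀ p : ι → V,
      (univ : Finset V).offDiag.filter (fun uv => p ∈ pathPairs uv.1 uv.2)
        = (univ.image p).offDiag := by
    intro p
    ext ⟨u, v⟩
    simp only [mem_filter, mem_offDiag, mem_image, mem_univ, true_and, pathPairs,
      Set.mem_ofPred_eq, Set.mem_range]
    tauto
  calc ∑ uv ∈ (univ : Finset V).offDiag, mass φ (pathPairs uv.1 uv.2)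
      = ∑ p, (#(univ.image p).offDiag : ℝ) * φ p := by
        simp only [mass, Set.indicator_apply]
        rw [sum_comm]
        refine sum_congr rfl fun p _ => ?_
        rw [← sum_filter, hpairs, sum_const, nsmul_eq_mul]
    _ ≤ ∑ p, ((2 * (Fintype.card ι).choose 2 : ℕ) : ℝ) * φ p :=
        sum_le_sum fun p _ => by gcongr; exacts [hφ p, card_offDiag_image_le p]
    _ = 2 * ((Fintype.card ι).choose 2 : ℝ) := by
        rw [← mul_sum, hφ1, mul_one, Nat.cast_mul, Nat.cast_two]

lemma two_mul_mul_exp_neg_le {C δ s : ℝ} (hC : 1 ≤ C) (hδ0 : 0 < δ) (hδ1 : δ ≤ 1)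
    (hs : 32 * (logb 2 C + 1 + log (1 / δ)) ≤ s) : 2 * C * (exp 3 * exp (-(s / 8))) ≤ δ := by
  have hlog2 : log 2 < 1 := log_two_lt_d9.trans (by norm_num)
  have hlogC : log C ≤ logb 2 C := by
    rw [logb, le_div_iff₀ (log_pos one_lt_two)]
    nlinarith [log_nonneg hC]
  have hlogb : 0 ≤ logb 2 C := logb_nonneg one_lt_two hC
  have hlogδ : 0 ≤ -log δ := neg_nonneg.2 (log_nonpos hδ0.le hδ1)
  have hlhs : 2 * C * (exp 3 * exp (-(s / 8))) = exp (log 2 + log C + 3 - s / 8) := by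
    rw [sub_eq_add_neg, exp_add, exp_add, exp_add, exp_log two_pos, exp_log (by linarith)]
    ring
  rw [hlhs, ← exp_log hδ0]
  refine exp_le_exp.2 ?_
  rw [one_div, log_inv] at hs
  linarith

theorem piProb_exists_pathPairs_deviation_le {ι V : Type*} [Fintype ι] [DecidableEq ι]
    [Fintype V] {φ : (ι → V) → ℝ} (hφ : ∀ p, 0 ≤ φ p) (hφ1 : ∑ p, φ p = 1) {R : ℕ} {ε : ℝ}
    (hε0 : 0 < ε) (hε1 : ε ≤ 1) (hR : 8 ≤ R * ε ^ 2) :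
    piProb φ R {ps | ∃ u v : V, u ≠ v ∧
        ε < |mass φ (pathPairs u v) - hits (pathPairs u v) ps / R|}
      ≤ 2 * (Fintype.card ι).choose 2 * (exp 3 * exp (-(R * ε ^ 2 / 8))) := by
  classical
  calc _ ≤ ∑ uv ∈ (univ : Finset V).offDiag, piProb φ R
          {ps | ε < |mass φ (pathPairs uv.1 uv.2) - hits (pathPairs uv.1 uv.2) ps / R|} := by
        refine piProb_le_sum_of_subset_biUnion hφ _ _ ?_
        rintro ps ⟨u, v, huv, hdev⟩
        exact Set.mem_biUnion (x := (u, v)) (by simpa using huv) hdev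
    _ ≤ ∑ uv ∈ (univ : Finset V).offDiag,
        mass φ (pathPairs uv.1 uv.2) * (exp 3 * exp (-(R * ε ^ 2 / 8))) :=
      sum_le_sum fun uv _ => (piProb_deviation_le hφ hφ1 _ hε0 hε1 hR).trans_eq (by ring)
    _ ≤ _ := by
      rw [← sum_mul]
      gcongr
      exact sum_mass_pathPairs_le hφ hφ1

end PathSampling

open PathSampling in
/-- Sample-size guarantee for Panther's random path sampling: there is a universal
constant `c > 0` such that for any nonempty finite vertex set `V`, path length
`T ≥ 1`, probability distribution `φ` on `T`-paths, and `ε, δ ∈ (0,1)`, if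
`R ≥ (c/ε²)·(log₂ C(T+1,2) + 1 + ln(1/δ))` then, with probability at least `1 - δ`
over an i.i.d. sample of `R` paths from `φ`, simultaneously for all distinct
vertices `u, v` the empirical path similarity `#{r : pᵣ ∈ P_{u,v}}/R` is within `ε`
of `φ(P_{u,v})`, the probability that a random path contains both `u` and `v`. -/
theorem panther_sample_size : ∃ c : ℝ, 0 < c ∧
    ∀ (V : Type) (_ : Fintype V) (_ : Nonempty V) (T : ℕ), 1 ≤ T →
      ∀ (φ : (Fin (T + 1) → V) → ℝ),
        (∀ p, 0 ≤ φ p) → (∑ p, φ p = 1) →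
      ∀ ε δ : ℝ, ε ∈ Set.Ioo (0 : ℝ) 1 → δ ∈ Set.Ioo (0 : ℝ) 1 →
      ∀ R : ℕ,
        (c / ε ^ 2) * (Real.logb 2 (((T + 1).choose 2 : ℝ)) + 1 + Real.log (1 / δ))
          ≤ (R : ℝ) →
      1 - δ ≤ ∑ ps : Fin R → (Fin (T + 1) → V),
        Set.indicator
          {ps : Fin R → (Fin (T + 1) → V) | ∀ u v : V, u ≠ v →
            |(∑ p, Set.indicator
                {q : Fin (T + 1) → V | u ∈ Set.range q ∧ v ∈ Set.range q} φ p) -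
              (∑ r, Set.indicator
                {q : Fin (T + 1) → V | u ∈ Set.range q ∧ v ∈ Set.range q}
                (fun _ => (1 : ℝ)) (ps r)) / (R : ℝ)| ≤ ε}
          (fun ps => ∏ r, φ (ps r)) ps := by
  refine ⟨32, by norm_num, ?_⟩
  intro V _ _ T hT φ hφ hφ1 ε δ ⟨hε0, hε1⟩ ⟨hδ0, hδ1⟩ R hR
  set C : ℝ := (((T + 1).choose 2 : ℕ) : ℝ)
  have hC : 1 ≤ C := Nat.one_le_cast.2 (Nat.choose_pos (by omega))
  have hRε : 32 * (logb 2 C + 1 + log (1 / δ)) ≤ R * ε ^ 2 := by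
    rwa [div_mul_eq_mul_div, div_le_iff₀ (by positivity)] at hR
  have hlog : 1 ≤ logb 2 C + 1 + log (1 / δ) := by
    linarith [logb_nonneg one_lt_two hC, log_nonneg (one_le_one_div hδ0 hδ1.le)]
  change 1 - δ ≤ piProb φ R {ps | ∀ u v : V, u ≠ v →
    |mass φ (pathPairs u v) - hits (pathPairs u v) ps / R| ≤ ε}
  set G := {ps : Fin R → Fin (T + 1) → V | ∀ u v : V, u ≠ v →
    |mass φ (pathPairs u v) - hits (pathPairs u v) ps / R| ≤ ε}
  have hGc : Gᶜ = {ps | ∃ u v : V, u ≠ v ∧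
      ε < |mass φ (pathPairs u v) - hits (pathPairs u v) ps / R|} := by
    ext ps
    simp [G]
  have hbad : piProb φ R Gᶜ ≤ δ := by
    rw [hGc]
    refine (piProb_exists_pathPairs_deviation_le hφ hφ1 hε0 hε1.le (by linarith)).trans ?_
    simpa using two_mul_mul_exp_neg_le hC hδ0 hδ1.le hRε
  linarith [piProb_add_piProb_compl hφ1 R G]
end
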